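/- arXiv:2506.09950 — 2 statements merged into one kernel-verified Lean document; each statement's English description precedes it below -/
import Mathlib

section
/- Let F = GF(q) and let J ⊆ R = F[x_1,...,x_n] be an ideal such that V_F(J) = {(c_1,...,c_n)} is a single point. Then J + F_eq = ⟨x_1 - c_1, ..., x_n - c_n⟩, where F_eq = ⟨x_1^q - x_1,...,x_n^q - x_n⟩ is the field equation ideal. -/
open MvPolynomial

/-- The variety over `F` of an ideal `I ⊆ F[x_1, …, x_n]`. -/
def variety {n : ℕ} {F : Type*} [Field F] (I : Ideal (MvPolynomial (Fin n) F)) :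
    Set (Fin n → F) :=
  {x | ∀ f ∈ I, eval x f = 0}

section Helpers

set_option linter.unusedSectionVars false

universe uF
variable {n : ℕ} {F : Type uF} [Field F] [Fintype F]

/-- Everything in the field-equation ideal evaluates to zero everywhere. -/
lemma eval_eq_zero_of_mem_fieldEq {q : ℕ} (hF : Fintype.card F = q)
    {g : MvPolynomial (Fin n) F}
    (hg : g ∈ Ideal.span (Set.range fun i : Fin n => (X i : MvPolynomial (Fin n) F) ^ q - X i))
    (v : Fin n → F) : eval v g = 0 := by
  have h : Ideal.span (Set.range fun i : Fin n => (X i : MvPolynomial (Fin n) F) ^ q - X i)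
      ≤ RingHom.ker (eval v) := by
    rw [Ideal.span_le]
    rintro _ ⟨i, rfl⟩
    simp [RingHom.mem_ker, ← hF, FiniteField.pow_card]
  exact h hg

lemma X_pow_red {q : ℕ} (hF : Fintype.card F = q) (i : Fin n) (k : ℕ) :
    ∃ e ≤ q - 1, (X i : MvPolynomial (Fin n) F) ^ k - X i ^ e ∈
      Ideal.span (Set.range fun i : Fin n => (X i : MvPolynomial (Fin n) F) ^ q - X i) := by
  have hq : 2 ≤ q := hF ▸ Fintype.one_lt_card
  induction k using Nat.strong_induction_on with
  | _ k ih =>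
    by_cases hk : k ≤ q - 1
    · exact ⟨k, hk, by simp⟩
    · push_neg at hk
      have hkq : q ≤ k := by omega
      obtain ⟨e, he, hmem⟩ := ih (k - (q - 1)) (by omega)
      refine ⟨e, he, ?_⟩
      have step : (X i : MvPolynomial (Fin n) F) ^ k - X i ^ (k - (q - 1)) ∈
          Ideal.span (Set.range fun i : Fin n => (X i : MvPolynomial (Fin n) F) ^ q - X i) := by
        have : (X i : MvPolynomial (Fin n) F) ^ k - X i ^ (k - (q - 1))
            = X i ^ (k - q) * (X i ^ q - X i) := by
          rw [mul_sub, ← pow_add, ← pow_succ]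
          congr 2 <;> omega
        rw [this]
        exact Ideal.mul_mem_left _ _ (Ideal.subset_span ⟨i, rfl⟩)
      have := Ideal.add_mem _ step hmem
      simpa using this

lemma mem_fieldEq_of_forall_eval_eq_zero {q : ℕ} (hF : Fintype.card F = q)
    (p : MvPolynomial (Fin n) F) (h : ∀ v : Fin n → F, eval v p = 0) :
    p ∈ Ideal.span (Set.range fun i : Fin n => (X i : MvPolynomial (Fin n) F) ^ q - X i) := by
  classical
  set I := Ideal.span (Set.range fun i : Fin n => (X i : MvPolynomial (Fin n) F) ^ q - X i)
    with hI
  -- every monomial is congruent mod I to a degree-restricted polynomial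
  have hm : ∀ (d : Fin n →₀ ℕ) (a : F),
      ∃ r ∈ restrictDegree (Fin n) F (q - 1), monomial d a - r ∈ I := by
    intro d a
    choose e he hmem using fun i => X_pow_red hF i (d i)
    refine ⟨monomial (Finsupp.equivFunOnFinite.symm e) a, ?_, ?_⟩
    · rw [mem_restrictDegree]
      intro s hs i
      have := support_monomial_subset hs
      simp only [Finset.mem_singleton] at this
      subst this
      simpa using he i
    · rw [← Ideal.Quotient.eq]
      have key : ∀ i, (Ideal.Quotient.mk I) ((X i : MvPolynomial (Fin n) F) ^ d i)
          = (Ideal.Quotient.mk I) (X i ^ e i) := fun i => Ideal.Quotient.eq.mpr (hmem i)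
      rw [monomial_eq, monomial_eq, Finsupp.prod_fintype _ _ (fun i => pow_zero _),
        Finsupp.prod_fintype _ _ (fun i => pow_zero _)]
      simp only [map_mul, map_prod, Finsupp.coe_equivFunOnFinite_symm]
      rw [Finset.prod_congr rfl fun i _ => key i]
  choose r hr hmemr using hm
  set r0 := ∑ d ∈ p.support, r d (coeff d p) with hr0
  have hr0mem : r0 ∈ restrictDegree (Fin n) F (q - 1) := Submodule.sum_mem _ fun d _ => hr _ _
  have hpr : p - r0 ∈ I := by
    have heq : p - r0 = ∑ d ∈ p.support, ((monomial d) (coeff d p) - r d (coeff d p)) := by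
      rw [Finset.sum_sub_distrib, support_sum_monomial_coeff, hr0]
    rw [heq]
    exact Ideal.sum_mem _ fun d _ => hmemr _ _
  have hre : ∀ v : Fin n → F, eval v r0 = 0 := by
    intro v
    have h1 := eval_eq_zero_of_mem_fieldEq hF hpr v
    have h2 := h v
    simp only [map_sub, h2, zero_sub, neg_eq_zero] at h1
    exact h1
  have : r0 = 0 := by
    -- transfer to a common universe via `rename` along `Fin n ≃ ULift (Fin n)`
    let e : Fin n → ULift.{uF} (Fin n) := @ULift.up.{uF,0} (Fin n)
    have hinj : Function.Injective e := fun a b hab => congrArg ULift.down hab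
    have hzero : rename e r0 = 0 := by
      apply eq_zero_of_eval_eq_zero (ULift.{uF} (Fin n)) F (rename e r0)
      · intro w
        rw [eval_rename]
        exact hre _
      · rw [mem_restrictDegree]
        intro s hs i
        rw [support_rename_of_injective hinj] at hs
        obtain ⟨t, ht, rfl⟩ := Finset.mem_image.mp hs
        rw [mem_restrictDegree] at hr0mem
        have h1 := hr0mem t ht i.down
        have h2 : (Finsupp.mapDomain e t) i = t i.down := by
          rw [show i = e i.down from rfl, Finsupp.mapDomain_apply hinj]
        rw [h2, hF]
        exact h1
    exact rename_injective e hinj (by rw [hzero, map_zero])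
  rw [this, sub_zero] at hpr
  exact hpr

lemma mem_span_X_sub_C_of_eval_eq_zero (c : Fin n → F) (p : MvPolynomial (Fin n) F)
    (h : eval c p = 0) :
    p ∈ Ideal.span (Set.range fun i : Fin n => (X i : MvPolynomial (Fin n) F) - C (c i)) := by
  set M := Ideal.span (Set.range fun i : Fin n => (X i : MvPolynomial (Fin n) F) - C (c i))
    with hM
  have key : ∀ p : MvPolynomial (Fin n) F, p - C (eval c p) ∈ M := by
    intro p
    induction p using MvPolynomial.induction_on with
    | C a => simp
    | add f g hf hg =>
      have : f + g - C (eval c (f + g)) = (f - C (eval c f)) + (g - C (eval c g)) := by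
        rw [map_add, map_add]; ring
      rw [this]
      exact Ideal.add_mem _ hf hg
    | mul_X f i hf =>
      have : f * X i - C (eval c (f * X i))
          = f * (X i - C (c i)) + (f - C (eval c f)) * C (c i) := by
        rw [map_mul, eval_X, map_mul]; ring
      rw [this]
      exact Ideal.add_mem _
        (Ideal.mul_mem_left _ _ (Ideal.subset_span ⟨i, rfl⟩))
        (Ideal.mul_mem_right _ _ hf)
  have := key p
  rwa [h, map_zero, sub_zero] at this

end Helpers

/-- Let `F = GF(q)` and let `J ⊆ F[x_1, …, x_n]` be an ideal with
`V_F(J) = {(c_1, …, c_n)}` a single point.  Then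
`J + F_eq = ⟨x_1 - c_1, …, x_n - c_n⟩`, where
`F_eq = ⟨x_1^q - x_1,...,x_n^q - x_n⟩` is the field equation ideal. -/
theorem ideal_plus_field_equations_of_singleton_variety (q n : ℕ) (F : Type*) [Field F]
    [Fintype F] (hF : Fintype.card F = q) (J : Ideal (MvPolynomial (Fin n) F))
    (c : Fin n → F) (hJ : variety J = {c}) :
    J ⊔ Ideal.span (Set.range fun i : Fin n => (X i : MvPolynomial (Fin n) F) ^ q - X i)
      = Ideal.span (Set.range fun i : Fin n => X i - C (c i)) := by
  classical
  have hq : 2 ≤ q := hF ▸ Fintype.one_lt_card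
  have hcV : c ∈ variety J := by rw [hJ]; exact Set.mem_singleton c
  apply le_antisymm
  · refine sup_le ?_ ?_
    · intro f hf
      exact mem_span_X_sub_C_of_eval_eq_zero c f (hcV f hf)
    · rw [Ideal.span_le]
      rintro _ ⟨i, rfl⟩
      exact mem_span_X_sub_C_of_eval_eq_zero c _ (by simp [← hF, FiniteField.pow_card])
  · rw [Ideal.span_le]
    rintro _ ⟨i, rfl⟩
    set P : MvPolynomial (Fin n) F := X i - C (c i) with hP
    -- for each `b ≠ c` pick `g b ∈ J` with `eval b (g b) = 1`
    have key : ∀ b : Fin n → F, b ≠ c → ∃ g ∈ J, eval b g = 1 := by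
      intro b hbc
      have hbV : b ∉ variety J := by rw [hJ]; exact hbc
      simp only [variety, Set.mem_setOf_eq, not_forall] at hbV
      obtain ⟨f, hfJ, hfne⟩ := hbV
      refine ⟨f ^ (q - 1), Ideal.pow_mem_of_mem J hfJ _ (by omega), ?_⟩
      rw [map_pow, ← hF]
      exact FiniteField.pow_card_sub_one_eq_one _ hfne
    choose! g hgJ hg1 using key
    set T : MvPolynomial (Fin n) F :=
      ∑ b ∈ Finset.univ.erase c, C (eval b P) * (indicator b * g b) with hT
    have hTJ : T ∈ J := Ideal.sum_mem _ fun b hb =>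
      Ideal.mul_mem_left _ _ (Ideal.mul_mem_left _ _ (hgJ b (Finset.ne_of_mem_erase hb)))
    have hPT : P - T ∈
        Ideal.span (Set.range fun i : Fin n => (X i : MvPolynomial (Fin n) F) ^ q - X i) := by
      apply mem_fieldEq_of_forall_eval_eq_zero hF
      intro v
      rw [map_sub]
      have hTv : eval v T = eval v P := by
        rw [hT, map_sum]
        by_cases hvc : v = c
        · subst hvc
          rw [Finset.sum_eq_zero, hP]
          · simp
          · intro b hb
            rw [map_mul, map_mul, eval_indicator_apply_eq_zero v b
              (Ne.symm (Finset.ne_of_mem_erase hb))]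
            ring
        · rw [Finset.sum_eq_single v]
          · rw [map_mul, map_mul, eval_indicator_apply_eq_one, hg1 v hvc, eval_C]
            ring
          · intro b _ hbv
            rw [map_mul, map_mul, eval_indicator_apply_eq_zero v b (Ne.symm hbv)]
            ring
          · intro hv
            exact absurd (Finset.mem_erase.mpr ⟨hvc, Finset.mem_univ v⟩) hv
      rw [hTv, sub_self]
    have h1 : P - T ∈ J ⊔ Ideal.span
        (Set.range fun i : Fin n => (X i : MvPolynomial (Fin n) F) ^ q - X i) :=
      Ideal.mem_sup_right hPT
    have h2 : T ∈ J ⊔ Ideal.span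
        (Set.range fun i : Fin n => (X i : MvPolynomial (Fin n) F) ^ q - X i) :=
      Ideal.mem_sup_left hTJ
    have := Ideal.add_mem _ h1 h2
    simpa using this
end

section
/- Let F = GF(q) and J ⊆ F[x_1,...,x_n] an ideal with V_F(J) = ∅. Then J + F_eq = (1), i.e., the ideal J together with the field equations x_i^q - x_i generates the whole polynomial ring. -/
open MvPolynomial

/-- Let `F = GF(q)` and `J ⊆ F[x_1, …, x_n]` an ideal with `V_F(J) = ∅`.  Then
`J + F_eq = (1)`: the ideal `J` together with the field equations `x_i^q - x_i`
generates the whole polynomial ring. -/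
theorem ideal_plus_field_equations_of_empty_variety (q n : ℕ) (F : Type*) [Field F]
    [Fintype F] (hF : Fintype.card F = q) (J : Ideal (MvPolynomial (Fin n) F))
    (hJ : variety J = ∅) :
    J ⊔ Ideal.span (Set.range fun i : Fin n => (X i : MvPolynomial (Fin n) F) ^ q - X i)
      = ⊤ := by
  classical
  subst hF
  by_contra h
  obtain ⟨m, hm, hle⟩ := Ideal.exists_le_maximal _ h
  have hJm : J ≤ m := le_trans le_sup_left hle
  have hFm : ∀ i : Fin n, (X i : MvPolynomial (Fin n) F) ^ Fintype.card F - X i ∈ m := by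
    intro i
    exact hle (Ideal.mem_sup_right (Ideal.subset_span ⟨i, rfl⟩))
  letI : Field (MvPolynomial (Fin n) F ⧸ m) := Ideal.Quotient.field m
  set φ : MvPolynomial (Fin n) F →ₐ[F] MvPolynomial (Fin n) F ⧸ m :=
    Ideal.Quotient.mkₐ F m with hφ
  set a : Fin n → MvPolynomial (Fin n) F ⧸ m := fun i => φ (X i) with haa
  have ha : ∀ i, (a i) ^ Fintype.card F = a i := by
    intro i
    have h0 : φ ((X i) ^ Fintype.card F - X i) = 0 := by
      rw [hφ, Ideal.Quotient.mkₐ_eq_mk, Ideal.Quotient.eq_zero_iff_mem]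
      exact hFm i
    rw [map_sub, map_pow, sub_eq_zero] at h0
    exact h0
  have hinj : Function.Injective (algebraMap F (MvPolynomial (Fin n) F ⧸ m)) :=
    (algebraMap F (MvPolynomial (Fin n) F ⧸ m)).injective
  have key : ∀ x : MvPolynomial (Fin n) F ⧸ m, x ^ Fintype.card F = x →
      ∃ c : F, algebraMap F (MvPolynomial (Fin n) F ⧸ m) c = x := by
    intro x hx
    by_contra hc
    push_neg at hc
    set P : Polynomial (MvPolynomial (Fin n) F ⧸ m) :=
      Polynomial.X ^ Fintype.card F - Polynomial.X with hP
    have hdeg : P.natDegree = Fintype.card F :=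
      FiniteField.X_pow_card_sub_X_natDegree_eq _ Fintype.one_lt_card
    have hP0 : P ≠ 0 := FiniteField.X_pow_card_sub_X_ne_zero _ Fintype.one_lt_card
    set Z : Finset (MvPolynomial (Fin n) F ⧸ m) :=
      insert x (Finset.univ.image (algebraMap F (MvPolynomial (Fin n) F ⧸ m))) with hZ
    have hZroots : Z.val ⊆ P.roots := by
      intro y hy
      rw [Polynomial.mem_roots hP0]
      have hy' : y = x ∨ ∃ c : F, algebraMap F (MvPolynomial (Fin n) F ⧸ m) c = y := by
        rcases Finset.mem_insert.mp hy with h1 | h1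
        · exact Or.inl h1
        · obtain ⟨c, _, hcc⟩ := Finset.mem_image.mp h1
          exact Or.inr ⟨c, hcc⟩
      have hpow : y ^ Fintype.card F = y := by
        rcases hy' with rfl | ⟨c, rfl⟩
        · exact hx
        · rw [← map_pow, FiniteField.pow_card]
      simp [hP, Polynomial.IsRoot, hpow]
    have hnotmem : x ∉ Finset.univ.image (algebraMap F (MvPolynomial (Fin n) F ⧸ m)) := by
      intro hmem
      obtain ⟨c, _, hcc⟩ := Finset.mem_image.mp hmem
      exact hc c hcc
    have hcard : Z.card = Fintype.card F + 1 := by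
      rw [hZ, Finset.card_insert_of_notMem hnotmem,
        Finset.card_image_of_injective _ hinj, Finset.card_univ]
    have := Polynomial.card_le_degree_of_subset_roots hZroots
    omega
  choose b hb using fun i => key (a i) (ha i)
  have hbv : b ∈ variety J := by
    intro f hf
    have h1 : φ f = 0 := by
      rw [hφ, Ideal.Quotient.mkₐ_eq_mk, Ideal.Quotient.eq_zero_iff_mem]
      exact hJm hf
    have h2 : φ f = aeval a f := by
      rw [MvPolynomial.aeval_unique φ]; rfl
    have h3 : (fun i => algebraMap F (MvPolynomial (Fin n) F ⧸ m) (b i)) = a :=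
      funext hb
    have h4 : aeval (fun i => algebraMap F (MvPolynomial (Fin n) F ⧸ m) (b i)) f
        = algebraMap F (MvPolynomial (Fin n) F ⧸ m) (eval b f) := by
      have h5 := MvPolynomial.eval₂_comp_left
        (algebraMap F (MvPolynomial (Fin n) F ⧸ m)) (RingHom.id F) b f
      rw [RingHom.comp_id] at h5
      rw [aeval_def]
      exact h5.symm
    rw [← h3, h4, h1] at h2
    exact hinj (by simpa using h2.symm)
  rw [hJ] at hbv
  exact hbv
end
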